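/- arXiv:1809.06792 — 2 statements merged into one kernel-verified Lean document; each statement's English description precedes it below -/
import Mathlib

section
/- Fix partitions α, β and a single variable specialization. Then Σ_ν s_{ν/α}(x) s_{ν/β}(y) = (1/(1−xy)) Σ_κ s_{α/κ}(y) s_{β/κ}(x) as an identity of formal power series in x and y, where s_{λ/μ}(x) = x^{|λ|−|μ|} if μ ≺ λ and 0 otherwise. -/
/-! The rowRSK local rule is a bijection `(κ, g) ↦ ν` from pairs of a common lower neighbour
`κ ≺ α, β` and a weight `g ∈ ℕ` onto the common upper neighbours `α, β ≺ ν`: `ν₀ = max(α₀, β₀) + g`,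
and `ν_{s+1}` is the reflection of `κ_s` in the interval `[max(α_{s+1}, β_{s+1}), min(α_s, β_s)]`,
to which both `κ_s` and `ν_{s+1}` are confined by the interlacing conditions. Adding up the
reflections gives `|ν| + |κ| = |α| + |β| + g`, so the term of `ν` is the term of `κ` times `(xy)^g`,
and summing the geometric series over `g` produces the factor `1/(1 - xy)`. -/

open scoped Classical

noncomputable section

/-! ## Partitions and interlacing -/

def IsPartition (a : ℕ → ℕ) : Prop :=
  (∀ i, a (i + 1) ≤ a i) ∧ ∃ N, ∀ i, N ≤ i → a i = 0

/-- `Interlaces μ lam` means μ ≺ lam, i.e. lam_{i+1} ≤ μ_i ≤ lam_i (0-indexed). -/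
def Interlaces (μ lam : ℕ → ℕ) : Prop :=
  ∀ i, lam (i + 1) ≤ μ i ∧ μ i ≤ lam i

def psum (a : ℕ → ℕ) : ℕ := ∑' i, a i

def plen (a : ℕ → ℕ) : ℕ := sInf {N | ∀ i, N ≤ i → a i = 0}

/-! ## rowRSK local rule -/

def rowRSK (α β κ : ℕ → ℕ) (G : ℕ) : ℕ → ℕ
  | 0 => max (α 0) (β 0) + G
  | s + 1 => max (α (s + 1)) (β (s + 1)) + min (α s) (β s) - κ s

/-! ## colRSK local rule -/

def Gdesc (α β κ : ℕ → ℕ) (G L : ℕ) : ℕ → ℕ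
  | 0 => G
  | k + 1 =>
      Gdesc α β κ G L k -
          min (Gdesc α β κ G L k) (κ (L - (k + 1)) - max (α (L - (k + 1) + 1)) (β (L - (k + 1) + 1)))
        + (min (α (L - (k + 1))) (β (L - (k + 1))) - κ (L - (k + 1)))

def colG (α β κ : ℕ → ℕ) (G s : ℕ) : ℕ :=
  Gdesc α β κ G (min (plen α) (plen β)) (min (plen α) (plen β) - s)

def colRSK (α β κ : ℕ → ℕ) (G : ℕ) : ℕ → ℕ
  | 0 => max (α 0) (β 0) + colG α β κ G 0
  | s + 1 => min (max (α (s + 1)) (β (s + 1)) + colG α β κ G (s + 1)) (κ s)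

def colGi (α β ν : ℕ → ℕ) : ℕ → ℕ
  | 0 => ν 0 - max (α 0) (β 0)
  | s + 1 =>
      ν (s + 1) + colGi α β ν s + max (min (α s) (β s) - colGi α β ν s) (ν (s + 1))
        - max (α (s + 1)) (β (s + 1)) - min (α s) (β s)

def colKinv (α β ν : ℕ → ℕ) (s : ℕ) : ℕ :=
  max (min (α s) (β s) - colGi α β ν s) (ν (s + 1))

def colGout (α β ν : ℕ → ℕ) : ℕ := colGi α β ν (min (plen α) (plen β))

instance : TopologicalSpace (MvPowerSeries (Fin 2) ℚ) :=
  (inferInstance : TopologicalSpace ((Fin 2 →₀ ℕ) → ℚ))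

def IsGT (n : ℕ) (z : ℕ → ℕ → ℕ) : Prop :=
  (∀ i j, n ≤ i ∨ i < j → z i j = 0) ∧
  (∀ i j, i + 1 < n → j ≤ i → z (i + 1) (j + 1) ≤ z i j ∧ z i j ≤ z (i + 1) j)

def gtType (z : ℕ → ℕ → ℕ) (i : ℕ) : ℕ :=
  (∑ j ∈ Finset.range (i + 1), z i j) - ∑ j ∈ Finset.range i, z (i - 1) j

def hpolyN (n k : ℕ) : MvPolynomial ℕ ℚ :=
  ∑ f ∈ Finset.univ.filter (fun f : Fin k → Fin n => Monotone f),
    ∏ j : Fin k, MvPolynomial.X ((f j : ℕ) + 1)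

def hZN (n : ℕ) (e : ℤ) : MvPolynomial ℕ ℚ := if 0 ≤ e then hpolyN n e.toNat else 0

def schurN (n : ℕ) (μ : YoungDiagram) : MvPolynomial ℕ ℚ :=
  Matrix.det (Matrix.of fun i j : Fin (μ.colLen 0) =>
    hZN n ((μ.rowLen (i : ℕ) : ℤ) - ((i : ℕ) : ℤ) + ((j : ℕ) : ℤ)))

abbrev LP : Type := AddMonoidAlgebra ℚ (ℕ →₀ ℤ)

def lpX (i : ℕ) (e : ℤ) : LP := AddMonoidAlgebra.single (Finsupp.single i e) 1

def hListLP (l : List LP) (k : ℕ) : LP :=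
  ∑ f ∈ Finset.univ.filter (fun f : Fin k → Fin l.length => Monotone f),
    ∏ j : Fin k, l.get (f j)

def hZLP (l : List LP) (e : ℤ) : LP := if 0 ≤ e then hListLP l e.toNat else 0

def varsSp (n : ℕ) : List LP := (List.range n).flatMap fun i => [lpX (i + 1) 1, lpX (i + 1) (-1)]

def varsSO (n : ℕ) : List LP := varsSp n ++ [1]

def varsS (n : ℕ) : List LP := (List.range n).map fun i => lpX (i + 1) 1

def spChar (n : ℕ) (lam : ℕ → ℕ) : LP :=
  (1 / 2 : ℚ) • Matrix.det (Matrix.of fun i j : Fin n =>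
    hZLP (varsSp n) ((lam (i : ℕ) : ℤ) - ((i : ℕ) : ℤ) + ((j : ℕ) : ℤ)) +
      hZLP (varsSp n) ((lam (i : ℕ) : ℤ) - ((i : ℕ) : ℤ) - ((j : ℕ) : ℤ)))

def soChar (n : ℕ) (lam : ℕ → ℕ) : LP :=
  Matrix.det (Matrix.of fun i j : Fin n =>
    hZLP (varsSO n) ((lam (i : ℕ) : ℤ) - ((i : ℕ) : ℤ) + ((j : ℕ) : ℤ)) -
      hZLP (varsSO n) ((lam (i : ℕ) : ℤ) - ((i : ℕ) : ℤ) - ((j : ℕ) : ℤ) - 2))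

def schurLP (n : ℕ) (lam : ℕ → ℕ) : LP :=
  Matrix.det (Matrix.of fun i j : Fin n =>
    hZLP (varsS n) ((lam (i : ℕ) : ℤ) - ((i : ℕ) : ℤ) + ((j : ℕ) : ℤ)))

def rect (n v : ℕ) : ℕ → ℕ := fun i => if i < n then v else 0

def UpRight (p : ℕ → ℕ × ℕ) (m : ℕ) : Prop :=
  ∀ k < m, p (k + 1) = ((p k).1 + 1, (p k).2) ∨ p (k + 1) = ((p k).1, (p k).2 + 1)

def domP2PR (n : ℕ) : Finset (ℕ × ℕ) :=
  (Finset.Icc 1 n ×ˢ Finset.Icc 1 n).filter fun q => q.2 ≤ q.1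

def wtP2PR (n : ℕ) (W : ℕ × ℕ → ℕ) : MvPolynomial ℕ ℚ :=
  ∏ q ∈ domP2PR n,
    (if q.1 = q.2 then MvPolynomial.X q.1 else MvPolynomial.X q.1 * MvPolynomial.X q.2) ^ W q

def PathP2PR (n : ℕ) (p : ℕ → ℕ × ℕ) : Prop :=
  p 0 = (1, 1) ∧ p (2 * n - 2) = (n, n) ∧ UpRight p (2 * n - 2) ∧
    ∀ k ≤ 2 * n - 2, p k ∈ domP2PR n

def WsetP2PR (n u : ℕ) : Set ((ℕ × ℕ) → ℕ) :=
  {W | (∀ q ∉ domP2PR n, W q = 0) ∧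
    ∀ p, PathP2PR n p → ∑ k ∈ Finset.range (2 * n - 1), W (p k) ≤ u}

def domP2L (n : ℕ) : Finset (ℕ × ℕ) :=
  (Finset.Icc 1 n ×ˢ Finset.Icc 1 n).filter fun q => q.1 + q.2 ≤ n + 1

def wtP2L (n : ℕ) (W : ℕ × ℕ → ℕ) : MvPolynomial ℕ ℚ :=
  ∏ q ∈ domP2L n, (MvPolynomial.X q.1 * MvPolynomial.X (n - q.2 + 1)) ^ W q

def PathP2L (n : ℕ) (p : ℕ → ℕ × ℕ) : Prop :=
  p 0 = (1, 1) ∧ (p (n - 1)).1 + (p (n - 1)).2 = n + 1 ∧ UpRight p (n - 1) ∧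
    ∀ k ≤ n - 1, p k ∈ domP2L n

def WsetP2L (n v : ℕ) : Set ((ℕ × ℕ) → ℕ) :=
  {W | (∀ q ∉ domP2L n, W q = 0) ∧
    ∀ p, PathP2L n p → ∑ k ∈ Finset.range n, W (p k) ≤ v}

def domP2HLR (n : ℕ) : Finset (ℕ × ℕ) :=
  (Finset.Icc 1 n ×ˢ Finset.Icc 1 (2 * n)).filter fun q => q.1 ≤ q.2 ∧ q.1 + q.2 ≤ 2 * n + 1

def rowVar (n j : ℕ) : ℕ := if j ≤ n then j else 2 * n + 1 - j

def wtP2HLR (n : ℕ) (W : ℕ × ℕ → ℕ) : MvPolynomial ℕ ℚ :=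
  ∏ q ∈ domP2HLR n,
    (if q.1 = q.2 then MvPolynomial.X q.1
      else MvPolynomial.X q.1 * MvPolynomial.X (rowVar n q.2)) ^ W q

def PathP2HLR (n : ℕ) (p : ℕ → ℕ × ℕ) : Prop :=
  p 0 = (1, 1) ∧ (p (2 * n - 1)).1 + (p (2 * n - 1)).2 = 2 * n + 1 ∧ UpRight p (2 * n - 1) ∧
    ∀ k ≤ 2 * n - 1, p k ∈ domP2HLR n

def WsetP2HLR (n u : ℕ) : Set ((ℕ × ℕ) → ℕ) :=
  {W | (∀ q ∉ domP2HLR n, W q = 0) ∧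
    ∀ p, PathP2HLR n p → ∑ k ∈ Finset.range (2 * n), W (p k) ≤ u}

def wtP2HLRlp (n : ℕ) (W : ℕ × ℕ → ℕ) : LP :=
  ∏ q ∈ domP2HLR n,
    (if q.1 = q.2 then lpX q.1 1 else lpX q.1 1 * lpX (rowVar n q.2) 1) ^ W q

def growRow (w : ℕ → ℕ → ℕ) : ℕ → ℕ → ℕ → ℕ
  | 0, _ => fun _ => 0
  | _ + 1, 0 => fun _ => 0
  | i + 1, j + 1 =>
      rowRSK (growRow w i (j + 1)) (growRow w (i + 1) j) (growRow w i j) (w (i + 1) (j + 1))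
  termination_by i j => (i, j)

def growCol (w : ℕ → ℕ → ℕ) : ℕ → ℕ → ℕ → ℕ
  | 0, _ => fun _ => 0
  | _ + 1, 0 => fun _ => 0
  | i + 1, j + 1 =>
      colRSK (growCol w i (j + 1)) (growCol w (i + 1) j) (growCol w i j) (w (i + 1) (j + 1))
  termination_by i j => (i, j)

theorem hasSum_prod_of_hasSum_fiber {β γ M : Type*} [AddCommMonoid M] [TopologicalSpace M]
    [ContinuousAdd M] [Fintype β] {f : β → γ → M} {a : β → M}
    (hf : ∀ b, HasSum (f b) (a b)) : HasSum (fun p : β × γ => f p.1 p.2) (∑ b, a b) := by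
  classical
  have hfiber (b : β) : HasSum (fun p : β × γ => if p.1 = b then f p.1 p.2 else 0) (a b) := by
    refine ((Prod.mk_right_injective b).hasSum_iff ?_).mp
      (by simpa [Function.comp_def] using hf b)
    rintro ⟨b', c⟩ hp
    exact if_neg fun h : b' = b => hp ⟨c, by rw [h]⟩
  simpa using hasSum_sum (s := Finset.univ) fun b _ => hfiber b

open MvPowerSeries.WithPiTopology in
theorem MvPowerSeries.hasSum_pow_of_constantCoeff_eq_zero {σ k : Type*} [Field k]
    [TopologicalSpace k] [IsTopologicalRing k] [T2Space k] {f : MvPowerSeries σ k}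
    (hf : constantCoeff f = 0) : HasSum (f ^ ·) (1 - f)⁻¹ := by
  have hc : constantCoeff (1 - f) ≠ 0 := by simp [hf]
  convert (summable_pow_of_constantCoeff_eq_zero hf).hasSum
  exact ((MvPowerSeries.eq_inv_iff_mul_eq_one hc).mpr
    (tsum_pow_mul_one_sub_of_constantCoeff_eq_zero hf)).symm

theorem rowRSK_zero (α β κ : ℕ → ℕ) (g : ℕ) : rowRSK α β κ g 0 = max (α 0) (β 0) + g := rfl

theorem rowRSK_succ (α β κ : ℕ → ℕ) (g s : ℕ) :
    rowRSK α β κ g (s + 1) = max (α (s + 1)) (β (s + 1)) + min (α s) (β s) - κ s := rfl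

theorem psum_eq_sum_range {a : ℕ → ℕ} {N : ℕ} (hN : ∀ i, N ≤ i → a i = 0) :
    psum a = ∑ i ∈ Finset.range N, a i :=
  tsum_eq_sum fun i hi => hN i (by simpa using hi)

theorem psum_le_psum {a b : ℕ → ℕ} (hab : a ≤ b) (hb : IsPartition b) : psum a ≤ psum b := by
  obtain ⟨N, hN⟩ := hb.2
  rw [psum_eq_sum_range hN, psum_eq_sum_range fun i hi => Nat.eq_zero_of_le_zero (hN i hi ▸ hab i)]
  exact Finset.sum_le_sum fun i _ => hab i

theorem IsPartition.finite_Iic {a : ℕ → ℕ} (ha : IsPartition a) : (Set.Iic a).Finite := by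
  obtain ⟨N, hN⟩ := ha.2
  let restrict : (ℕ → ℕ) → (Fin N → ℕ) := fun κ i => κ i
  refine Set.Finite.of_finite_image (f := restrict) ((Set.finite_Iic (restrict a)).subset ?_) ?_
  · rintro _ ⟨κ, hκ, rfl⟩ i
    exact hκ i
  · intro κ hκ κ' hκ' h
    funext i
    by_cases hi : i < N
    · exact congrFun h ⟨i, hi⟩
    · have : κ i ≤ a i := hκ i
      have : κ' i ≤ a i := hκ' i
      have := hN i (by omega)
      omega

theorem Interlaces.isPartition_left {μ lam : ℕ → ℕ} (h : Interlaces μ lam)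
    (hlam : IsPartition lam) : IsPartition μ := by
  obtain ⟨N, hN⟩ := hlam.2
  refine ⟨fun i => (h (i + 1)).2.trans (h i).1, N, fun i hi => ?_⟩
  have := (h i).2; have := hN i hi
  omega

theorem Interlaces.isPartition_right {μ lam : ℕ → ℕ} (h : Interlaces μ lam) (hμ : IsPartition μ) :
    IsPartition lam := by
  obtain ⟨N, hN⟩ := hμ.2
  refine ⟨fun i => (h i).1.trans (h i).2, N + 1, fun i hi => ?_⟩
  obtain ⟨s, rfl⟩ : ∃ s, i = s + 1 := ⟨i - 1, by omega⟩
  have := (h s).1; have := hN s (by omega)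
  omega

section CommonInterlacing

variable {α β : ℕ → ℕ}

theorem interlaces_and_interlaces_iff_left {κ : ℕ → ℕ} :
    Interlaces κ α ∧ Interlaces κ β ↔
      ∀ s, max (α (s + 1)) (β (s + 1)) ≤ κ s ∧ κ s ≤ min (α s) (β s) := by
  simp only [Interlaces, max_le_iff, le_min_iff, ← forall_and]
  exact forall_congr' fun s => by tauto

theorem interlaces_and_interlaces_iff_right {ν : ℕ → ℕ} :
    Interlaces α ν ∧ Interlaces β ν ↔
      ∀ s, ν (s + 1) ≤ min (α s) (β s) ∧ max (α s) (β s) ≤ ν s := by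
  simp only [Interlaces, max_le_iff, le_min_iff, ← forall_and]
  exact forall_congr' fun s => by tauto

theorem interlaces_rowRSK {κ : ℕ → ℕ} (hκα : Interlaces κ α) (hκβ : Interlaces κ β) (g : ℕ) :
    Interlaces α (rowRSK α β κ g) ∧ Interlaces β (rowRSK α β κ g) := by
  have hκ := interlaces_and_interlaces_iff_left.mp ⟨hκα, hκβ⟩
  refine interlaces_and_interlaces_iff_right.mpr fun s => ?_
  cases s with
  | zero =>
    have := hκ 0
    rw [rowRSK_succ, rowRSK_zero]
    omega
  | succ s =>
    have := hκ s; have := hκ (s + 1)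
    rw [rowRSK_succ, rowRSK_succ]
    omega

theorem psum_rowRSK_add_psum (hα : IsPartition α) (hβ : IsPartition β) {κ : ℕ → ℕ}
    (hκα : Interlaces κ α) (hκβ : Interlaces κ β) (g : ℕ) :
    psum (rowRSK α β κ g) + psum κ = psum α + psum β + g := by
  obtain ⟨Nα, hNα⟩ := hα.2
  obtain ⟨Nβ, hNβ⟩ := hβ.2
  set N := Nα + Nβ
  have hαN : ∀ i, N ≤ i → α i = 0 := fun i hi => hNα i (by omega)
  have hβN : ∀ i, N ≤ i → β i = 0 := fun i hi => hNβ i (by omega)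
  have hκN : ∀ i, N ≤ i → κ i = 0 := fun i hi =>
    Nat.eq_zero_of_le_zero (hαN i hi ▸ (hκα i).2)
  have hνN : ∀ i, N + 1 ≤ i → rowRSK α β κ g i = 0 := by
    intro i hi
    obtain ⟨s, rfl⟩ : ∃ s, i = s + 1 := ⟨i - 1, by omega⟩
    rw [rowRSK_succ, hαN (s + 1) (by omega), hβN (s + 1) (by omega), hαN s (by omega),
      hβN s (by omega)]
    simp
  have hκ := interlaces_and_interlaces_iff_left.mp ⟨hκα, hκβ⟩
  have hreflect :
      ∑ s ∈ Finset.range N, rowRSK α β κ g (s + 1) + ∑ s ∈ Finset.range N, κ s =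
        ∑ s ∈ Finset.range N, max (α (s + 1)) (β (s + 1)) +
          ∑ s ∈ Finset.range N, min (α s) (β s) := by
    simp only [← Finset.sum_add_distrib, rowRSK_succ]
    exact Finset.sum_congr rfl fun s _ => by have := hκ s; omega
  have hmax : ∑ s ∈ Finset.range N, max (α (s + 1)) (β (s + 1)) + max (α 0) (β 0) =
      ∑ s ∈ Finset.range N, max (α s) (β s) := by
    rw [← Finset.sum_range_succ' (fun s => max (α s) (β s)), Finset.sum_range_succ,
      hαN N le_rfl, hβN N le_rfl, max_self, add_zero]
  have hmaxmin : ∑ s ∈ Finset.range N, max (α s) (β s) + ∑ s ∈ Finset.range N, min (α s) (β s) =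
      ∑ s ∈ Finset.range N, α s + ∑ s ∈ Finset.range N, β s := by
    simp only [← Finset.sum_add_distrib, max_add_min]
  rw [psum_eq_sum_range hνN, psum_eq_sum_range hκN, psum_eq_sum_range hαN,
    psum_eq_sum_range hβN, Finset.sum_range_succ', rowRSK_zero]
  omega

def rowRSKInv (α β ν : ℕ → ℕ) (s : ℕ) : ℕ :=
  max (α (s + 1)) (β (s + 1)) + min (α s) (β s) - ν (s + 1)

theorem interlaces_rowRSKInv {ν : ℕ → ℕ} (hαν : Interlaces α ν) (hβν : Interlaces β ν) :
    Interlaces (rowRSKInv α β ν) α ∧ Interlaces (rowRSKInv α β ν) β := by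
  have hν := interlaces_and_interlaces_iff_right.mp ⟨hαν, hβν⟩
  refine interlaces_and_interlaces_iff_left.mpr fun s => ?_
  have := hν s; have := hν (s + 1)
  unfold rowRSKInv
  omega

theorem rowRSKInv_rowRSK {κ : ℕ → ℕ} (hκα : Interlaces κ α) (hκβ : Interlaces κ β) (g : ℕ) :
    rowRSKInv α β (rowRSK α β κ g) = κ := by
  have hκ := interlaces_and_interlaces_iff_left.mp ⟨hκα, hκβ⟩
  funext s
  have := hκ s
  rw [rowRSKInv, rowRSK_succ]
  omega

theorem rowRSK_rowRSKInv {ν : ℕ → ℕ} (hαν : Interlaces α ν) (hβν : Interlaces β ν) :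
    rowRSK α β (rowRSKInv α β ν) (ν 0 - max (α 0) (β 0)) = ν := by
  have hν := interlaces_and_interlaces_iff_right.mp ⟨hαν, hβν⟩
  funext i
  cases i with
  | zero =>
    have := hν 0
    rw [rowRSK_zero]
    omega
  | succ s =>
    have := hν s; have := hν (s + 1)
    rw [rowRSK_succ, rowRSKInv]
    omega

def rowRSKEquiv (hα : IsPartition α) :
    {κ : ℕ → ℕ // IsPartition κ ∧ Interlaces κ α ∧ Interlaces κ β} × ℕ ≃
      {ν : ℕ → ℕ // IsPartition ν ∧ Interlaces α ν ∧ Interlaces β ν} where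
  toFun p :=
    have hν := interlaces_rowRSK p.1.2.2.1 p.1.2.2.2 p.2
    ⟨rowRSK α β p.1.1 p.2, hν.1.isPartition_right hα, hν⟩
  invFun ν :=
    have hκ := interlaces_rowRSKInv ν.2.2.1 ν.2.2.2
    (⟨rowRSKInv α β ν.1, hκ.1.isPartition_left hα, hκ⟩, ν.1 0 - max (α 0) (β 0))
  left_inv := by
    rintro ⟨⟨κ, -, hκα, hκβ⟩, g⟩
    refine Prod.ext (Subtype.ext (rowRSKInv_rowRSK hκα hκβ g)) ?_
    change max (α 0) (β 0) + g - max (α 0) (β 0) = g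
    omega
  right_inv := by
    rintro ⟨ν, -, hαν, hβν⟩
    exact Subtype.ext (rowRSK_rowRSKInv hαν hβν)

end CommonInterlacing

-- The topology on power series fixed above is that of `MvPowerSeries.WithPiTopology`.
instance : IsTopologicalRing (MvPowerSeries (Fin 2) ℚ) :=
  MvPowerSeries.WithPiTopology.instIsTopologicalRing (Fin 2) ℚ

instance : T2Space (MvPowerSeries (Fin 2) ℚ) :=
  MvPowerSeries.WithPiTopology.instT2Space

open Filter MeasureTheory in

theorem stmt3 (α β : ℕ → ℕ) (hα : IsPartition α) (hβ : IsPartition β) :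
    (∑' ν : {ν : ℕ → ℕ // IsPartition ν ∧ Interlaces α ν ∧ Interlaces β ν},
        (MvPowerSeries.X 0 : MvPowerSeries (Fin 2) ℚ) ^ (psum ν.1 - psum α) *
          MvPowerSeries.X 1 ^ (psum ν.1 - psum β)) =
      (1 - MvPowerSeries.X 0 * MvPowerSeries.X 1 : MvPowerSeries (Fin 2) ℚ)⁻¹ *
        ∑' κ : {κ : ℕ → ℕ // IsPartition κ ∧ Interlaces κ α ∧ Interlaces κ β},
          (MvPowerSeries.X 1 : MvPowerSeries (Fin 2) ℚ) ^ (psum α - psum κ.1) *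
            MvPowerSeries.X 0 ^ (psum β - psum κ.1) := by
  set x : MvPowerSeries (Fin 2) ℚ := MvPowerSeries.X 0
  set y : MvPowerSeries (Fin 2) ℚ := MvPowerSeries.X 1
  set K := {κ : ℕ → ℕ // IsPartition κ ∧ Interlaces κ α ∧ Interlaces κ β}
  have : Finite K := (hα.finite_Iic.subset fun κ hκ i => (hκ.2.1 i).2).to_subtype
  let _ : Fintype K := Fintype.ofFinite K
  have hterm : ∀ p : K × ℕ,
      x ^ (psum (rowRSKEquiv hα p).1 - psum α) * y ^ (psum (rowRSKEquiv hα p).1 - psum β) =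
        y ^ (psum α - psum p.1.1) * x ^ (psum β - psum p.1.1) * (x * y) ^ p.2 := by
    rintro ⟨⟨κ, -, hκα, hκβ⟩, g⟩
    have hsum := psum_rowRSK_add_psum hα hβ hκα hκβ g
    have hle_α := psum_le_psum (fun i => (hκα i).2) hα
    have hle_β := psum_le_psum (fun i => (hκβ i).2) hβ
    change x ^ (psum (rowRSK α β κ g) - psum α) * y ^ (psum (rowRSK α β κ g) - psum β) = _
    rw [show psum (rowRSK α β κ g) - psum α = psum β - psum κ + g by omega,
      show psum (rowRSK α β κ g) - psum β = psum α - psum κ + g by omega]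
    ring
  have hgeom : HasSum (fun g => (x * y) ^ g) (1 - x * y)⁻¹ :=
    MvPowerSeries.hasSum_pow_of_constantCoeff_eq_zero (by simp [x, y])
  rw [← (rowRSKEquiv hα).tsum_eq, tsum_congr hterm,
    (hasSum_prod_of_hasSum_fiber fun κ : K =>
      hgeom.mul_left (y ^ (psum α - psum κ.1) * x ^ (psum β - psum κ.1))).tsum_eq,
    tsum_fintype, ← Finset.sum_mul, mul_comm]

end
end

section
/- Fix partitions α, β. The colRSK local rule is a bijection from the set {(κ, G) : κ a partition with α ≻ κ ≺ β, G ∈ ℕ} onto the set {ν : ν a partition with α ≺ ν ≻ β}, with inverse given by the colRSK⁻¹ algorithm: G_1 = max(α_1, β_1) − ν_1, κ_s = max(min(α_s, β_s) − G_s, ν_{s+1}), G_{s+1} = ν_{s+1} + G_s − max(α_{s+1}, β_{s+1}) − min(α_s, β_s) + κ_s. -/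
open scoped Classical

noncomputable section

/-!
Write `L = min (plen α) (plen β)`. The forward rule runs the carry `G_s` down from `G_L = G`
and sets `ν_0 = max(α_0, β_0) + G_0`, `ν_{s+1} = min(max(α_{s+1}, β_{s+1}) + G_{s+1}, κ_s)`.
Read upward, these equations can be solved row by row: `ν_0` gives back `G_0`, and from `G_s` and
`ν_{s+1}` one recovers `κ_s = max(min(α_s, β_s) - G_s, ν_{s+1})` and then `G_{s+1}`. Each step is
an identity of truncated `min`/`max` arithmetic that holds exactly because of the interlacing
bounds `max(α_{s+1}, β_{s+1}) ≤ κ_s ≤ min(α_s, β_s)` and `ν_{s+1} ≤ min(α_s, β_s)`,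
`max(α_s, β_s) ≤ ν_s`. Beyond `L` these bounds force `κ_s = ν_{s+1} = 0`.
-/

theorem IsPartition.eq_zero_of_plen_le {a : ℕ → ℕ} (h : IsPartition a) {i : ℕ}
    (hi : plen a ≤ i) : a i = 0 :=
  Nat.sInf_mem h.2 i hi

theorem IsPartition.of_interlaces_left {μ lam : ℕ → ℕ} (hlam : IsPartition lam)
    (h : Interlaces μ lam) : IsPartition μ := by
  obtain ⟨-, N, hN⟩ := hlam
  refine ⟨fun i => (h (i + 1)).2.trans (h i).1, N, fun i hi => ?_⟩
  exact Nat.eq_zero_of_le_zero ((h i).2.trans (hN i hi).le)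

theorem IsPartition.of_interlaces_right {μ lam : ℕ → ℕ} (hμ : IsPartition μ)
    (h : Interlaces μ lam) : IsPartition lam := by
  obtain ⟨-, N, hN⟩ := hμ
  refine ⟨fun i => (h i).1.trans (h i).2, N + 1, fun i hi => ?_⟩
  obtain ⟨j, rfl⟩ : ∃ j, i = j + 1 := ⟨i - 1, by omega⟩
  exact Nat.eq_zero_of_le_zero ((h j).1.trans (hN j (by omega)).le)

section ColRSK

variable {α β κ ν : ℕ → ℕ} {G s : ℕ}

theorem min_eq_zero_of_plen_le (hα : IsPartition α) (hβ : IsPartition β)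
    (hs : min (plen α) (plen β) ≤ s) : min (α s) (β s) = 0 := by
  rcases min_le_iff.mp hs with h | h
  · simp [hα.eq_zero_of_plen_le h]
  · simp [hβ.eq_zero_of_plen_le h]

theorem colG_of_le (hs : min (plen α) (plen β) ≤ s) : colG α β κ G s = G := by
  rw [colG, Nat.sub_eq_zero_of_le hs, Gdesc]

theorem colG_of_lt (hs : s < min (plen α) (plen β)) :
    colG α β κ G s =
      colG α β κ G (s + 1) - min (colG α β κ G (s + 1)) (κ s - max (α (s + 1)) (β (s + 1)))
        + (min (α s) (β s) - κ s) := by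
  have hsucc : min (plen α) (plen β) - s = min (plen α) (plen β) - (s + 1) + 1 := by omega
  have hrow : min (plen α) (plen β) - (min (plen α) (plen β) - (s + 1) + 1) = s := by omega
  rw [colG, hsucc, Gdesc, hrow]
  rfl

theorem colGi_colRSK (hκα : Interlaces κ α) (hκβ : Interlaces κ β)
    (hs : s ≤ min (plen α) (plen β)) : colGi α β (colRSK α β κ G) s = colG α β κ G s := by
  induction s with
  | zero => simp only [colGi, colRSK]; omega
  | succ s ih =>
    have hrec := colG_of_lt (κ := κ) (G := G) hs
    have := hκα s
    have := hκβ s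
    rw [colGi, ih (by omega)]
    simp only [colRSK]
    omega

theorem colGout_colRSK (hκα : Interlaces κ α) (hκβ : Interlaces κ β) :
    colGout α β (colRSK α β κ G) = G := by
  rw [colGout, colGi_colRSK hκα hκβ le_rfl, colG_of_le le_rfl]

theorem colKinv_colRSK (hα : IsPartition α) (hβ : IsPartition β) (hκα : Interlaces κ α)
    (hκβ : Interlaces κ β) : colKinv α β (colRSK α β κ G) = κ := by
  funext s
  have := hκα s
  have := hκβ s
  rw [colKinv, colRSK]
  rcases lt_or_ge s (min (plen α) (plen β)) with hs | hs
  · have hrec := colG_of_lt (κ := κ) (G := G) hs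
    rw [colGi_colRSK hκα hκβ hs.le]
    omega
  · have := min_eq_zero_of_plen_le hα hβ hs
    omega

theorem colG_colKinv (hαν : Interlaces α ν) (hβν : Interlaces β ν)
    (hs : s ≤ min (plen α) (plen β)) :
    colG α β (colKinv α β ν) (colGout α β ν) s = colGi α β ν s := by
  induction hs using Nat.decreasingInduction with
  | self => exact colG_of_le le_rfl
  | of_succ s hs ih =>
    have := hαν s
    have := hαν (s + 1)
    have := hβν s
    have := hβν (s + 1)
    rw [colG_of_lt hs, ih, colGi, colKinv]
    omega

theorem colRSK_colKinv (hα : IsPartition α) (hβ : IsPartition β) (hαν : Interlaces α ν)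
    (hβν : Interlaces β ν) : colRSK α β (colKinv α β ν) (colGout α β ν) = ν := by
  funext t
  cases t with
  | zero =>
    have := hαν 0
    have := hβν 0
    rw [colRSK, colG_colKinv hαν hβν (Nat.zero_le _), colGi]
    omega
  | succ s =>
    have := hαν s
    have := hαν (s + 1)
    have := hβν s
    have := hβν (s + 1)
    rw [colRSK, colKinv]
    rcases le_or_gt (s + 1) (min (plen α) (plen β)) with hs | hs
    · rw [colG_colKinv hαν hβν hs, colGi]
      omega
    · have := min_eq_zero_of_plen_le hα hβ (s := s) (by omega)
      omega

theorem interlaces_colRSK (hκα : Interlaces κ α) (hκβ : Interlaces κ β) :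
    Interlaces α (colRSK α β κ G) ∧ Interlaces β (colRSK α β κ G) := by
  suffices h : ∀ i, colRSK α β κ G (i + 1) ≤ min (α i) (β i) ∧
      max (α i) (β i) ≤ colRSK α β κ G i by
    exact ⟨fun i => ⟨(h i).1.trans (min_le_left _ _), (le_max_left _ _).trans (h i).2⟩,
      fun i => ⟨(h i).1.trans (min_le_right _ _), (le_max_right _ _).trans (h i).2⟩⟩
  intro i
  have := hκα i
  have := hκβ i
  cases i with
  | zero => simp only [colRSK]; omega
  | succ j =>
    have := hκα j
    have := hκβ j
    simp only [colRSK]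
    omega

theorem colKinv_interlaces (hαν : Interlaces α ν) (hβν : Interlaces β ν) :
    Interlaces (colKinv α β ν) α ∧ Interlaces (colKinv α β ν) β := by
  suffices h : ∀ s, max (α (s + 1)) (β (s + 1)) ≤ colKinv α β ν s ∧
      colKinv α β ν s ≤ min (α s) (β s) by
    exact ⟨fun s => ⟨(le_max_left _ _).trans (h s).1, (h s).2.trans (min_le_left _ _)⟩,
      fun s => ⟨(le_max_right _ _).trans (h s).1, (h s).2.trans (min_le_right _ _)⟩⟩
  intro s
  have := hαν s
  have := hαν (s + 1)
  have := hβν s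
  have := hβν (s + 1)
  rw [colKinv]
  omega

end ColRSK

open Filter MeasureTheory in

theorem stmt5 (α β : ℕ → ℕ) (hα : IsPartition α) (hβ : IsPartition β) :
    Set.BijOn (fun p : (ℕ → ℕ) × ℕ => colRSK α β p.1 p.2)
      {p | IsPartition p.1 ∧ Interlaces p.1 α ∧ Interlaces p.1 β}
      {ν | IsPartition ν ∧ Interlaces α ν ∧ Interlaces β ν} ∧
    Set.InvOn (fun ν => (colKinv α β ν, colGout α β ν))
      (fun p : (ℕ → ℕ) × ℕ => colRSK α β p.1 p.2)
      {p | IsPartition p.1 ∧ Interlaces p.1 α ∧ Interlaces p.1 β}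
      {ν | IsPartition ν ∧ Interlaces α ν ∧ Interlaces β ν} := by
  have hmaps : Set.MapsTo (fun p : (ℕ → ℕ) × ℕ => colRSK α β p.1 p.2)
      {p | IsPartition p.1 ∧ Interlaces p.1 α ∧ Interlaces p.1 β}
      {ν | IsPartition ν ∧ Interlaces α ν ∧ Interlaces β ν} := by
    rintro ⟨κ, G⟩ ⟨-, hκα, hκβ⟩
    obtain ⟨hαν, hβν⟩ := interlaces_colRSK (G := G) hκα hκβ
    exact ⟨hα.of_interlaces_right hαν, hαν, hβν⟩
  have hmaps_inv : Set.MapsTo (fun ν => (colKinv α β ν, colGout α β ν))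
      {ν | IsPartition ν ∧ Interlaces α ν ∧ Interlaces β ν}
      {p | IsPartition p.1 ∧ Interlaces p.1 α ∧ Interlaces p.1 β} := by
    rintro ν ⟨-, hαν, hβν⟩
    obtain ⟨hκα, hκβ⟩ := colKinv_interlaces hαν hβν
    exact ⟨hα.of_interlaces_left hκα, hκα, hκβ⟩
  have hinv : Set.InvOn (fun ν => (colKinv α β ν, colGout α β ν))
      (fun p : (ℕ → ℕ) × ℕ => colRSK α β p.1 p.2)
      {p | IsPartition p.1 ∧ Interlaces p.1 α ∧ Interlaces p.1 β}
      {ν | IsPartition ν ∧ Interlaces α ν ∧ Interlaces β ν} :=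
    ⟨fun p ⟨_, hκα, hκβ⟩ => Prod.ext (colKinv_colRSK hα hβ hκα hκβ) (colGout_colRSK hκα hκβ),
      fun ν ⟨_, hαν, hβν⟩ => colRSK_colKinv hα hβ hαν hβν⟩
  exact ⟨hinv.bijOn hmaps hmaps_inv, hinv⟩

end
end
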